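/- arXiv:2603.14510 — 2 statements merged into one kernel-verified Lean document; each statement's English description precedes it below -/
import Mathlib

section
/- For every integer h₀ ≥ 3, there exists a strictly decreasing sequence (A_q) of sets of integers with intersection A such that the set of h ≥ 1 for which hA equals the intersection over q of hA_q is exactly {1} ∪ {h : h ≥ h₀}. -/
open Pointwise

/-- The `h`-fold sumset: all sums of `h` not necessarily distinct elements of `S`
(for `h ≥ 1`; by convention `hfold 0 S = S`). -/
def hfold {α : Type*} [Add α] : ℕ → Set α → Set α
  | 0, S => S
  | 1, S => S
  | n + 2, S => hfold (n + 1) S + S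

/-!
Let `m = h₀ + 1`, let `A` be the integers congruent to `0` or `1` modulo `m`, and let
`A_q = A ∪ {2 + j m | j ≥ q}`. The extra points shrink away, so `⋂ A_q = A`, while
`hA` is the set of integers congruent to one of `0, …, h` modulo `m`. For `h ≥ m - 1` this
is all of `ℤ`, so nothing can be lost in the intersection. For `2 ≤ h < h₀`, however,
`h + 1 = (1 - q m) + (2 + q m) + (h - 2) · 1 ∈ hA_q` for every `q`, although `h + 1 ∉ hA`.
-/

section hfold

variable {α : Type*} [Add α]

theorem hfold_succ {n : ℕ} (hn : 1 ≤ n) (S : Set α) : hfold (n + 1) S = hfold n S + S := by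
  obtain ⟨k, rfl⟩ := Nat.exists_eq_add_of_le' hn
  rfl

theorem hfold_mono (n : ℕ) {S T : Set α} (hST : S ⊆ T) : hfold n S ⊆ hfold n T := by
  induction n with
  | zero => exact hST
  | succ k ih =>
    rcases k with _ | k
    · exact hST
    · exact Set.add_subset_add ih hST

theorem add_mem_hfold_succ {n : ℕ} (hn : 1 ≤ n) {S : Set α} {x s : α} (hx : x ∈ hfold n S)
    (hs : s ∈ S) : x + s ∈ hfold (n + 1) S := by
  rw [hfold_succ hn]
  exact Set.add_mem_add hx hs

theorem hfold_iInter_eq_iInter_hfold_of_eq_univ {ι : Type*} {n : ℕ} {A : ι → Set α}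
    (huniv : hfold n (⋂ i, A i) = Set.univ) : hfold n (⋂ i, A i) = ⋂ i, hfold n (A i) := by
  refine huniv ▸ (Set.iInter_eq_univ.2 fun i => Set.univ_subset_iff.1 ?_).symm
  exact huniv ▸ hfold_mono n (Set.iInter_subset A i)

end hfold

section residues

def residuesUpTo (m : ℤ) (n : ℕ) : Set ℤ := {x | ∃ k : ℕ, k ≤ n ∧ x ≡ k [ZMOD m]}

variable {m : ℤ}

theorem residuesUpTo_add_residuesUpTo (a b : ℕ) :
    residuesUpTo m a + residuesUpTo m b = residuesUpTo m (a + b) := by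
  ext x
  constructor
  · rintro ⟨y, ⟨k₁, hk₁, hy⟩, z, ⟨k₂, hk₂, hz⟩, rfl⟩
    exact ⟨k₁ + k₂, by omega, by push_cast; exact hy.add hz⟩
  · rintro ⟨k, hk, hx⟩
    refine ⟨x - (k - min k a : ℕ), ⟨min k a, min_le_right k a, ?_⟩,
      (k - min k a : ℕ), ⟨k - min k a, by omega, Int.ModEq.rfl⟩, sub_add_cancel x _⟩
    convert hx.sub_right ((k - min k a : ℕ) : ℤ) using 1
    push_cast [Nat.cast_sub (min_le_left k a)]
    ring

theorem hfold_residuesUpTo_one {n : ℕ} (hn : 1 ≤ n) :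
    hfold n (residuesUpTo m 1) = residuesUpTo m n := by
  induction n, hn using Nat.le_induction with
  | base => rfl
  | succ n hn ih => rw [hfold_succ hn, ih, residuesUpTo_add_residuesUpTo]

theorem residuesUpTo_eq_univ {n : ℕ} (hm : 0 < m) (hmn : m ≤ n + 1) :
    residuesUpTo m n = Set.univ := by
  refine Set.eq_univ_of_forall fun x => ?_
  obtain ⟨k, hkm, hk⟩ := Int.existsUnique_equiv_nat x hm
  exact ⟨k, by omega, hk.symm⟩

theorem natCast_notMem_residuesUpTo {n k : ℕ} (hnk : n < k) (hkm : k < m) :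
    (k : ℤ) ∉ residuesUpTo m n := by
  rintro ⟨j, hjn, hj⟩
  have hjk : (k : ℤ) = j := by
    rw [Int.ModEq, Int.emod_eq_of_lt (by omega) hkm, Int.emod_eq_of_lt (by omega) (by omega)] at hj
    exact hj
  omega

end residues

section tower

def progressionTail (m c : ℤ) (q : ℕ) : Set ℤ := {x | ∃ j : ℕ, q ≤ j ∧ x = c + j * m}

def residueTower (m : ℤ) (q : ℕ) : Set ℤ := residuesUpTo m 1 ∪ progressionTail m 2 q

variable {m : ℤ}

theorem add_mul_notMem_progressionTail_succ (hm : m ≠ 0) (c : ℤ) (q : ℕ) :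
    c + q * m ∉ progressionTail m c (q + 1) := by
  rintro ⟨j, hj, hjq⟩
  have : (q : ℤ) = j := mul_right_cancel₀ hm (add_left_cancel hjq)
  omega

theorem iInter_progressionTail (hm : m ≠ 0) (c : ℤ) : ⋂ q, progressionTail m c q = ∅ := by
  refine Set.eq_empty_of_forall_notMem fun x hx => ?_
  obtain ⟨j, -, rfl⟩ := Set.mem_iInter.1 hx 0
  exact add_mul_notMem_progressionTail_succ hm c j (Set.mem_iInter.1 hx (j + 1))

theorem iInter_residueTower (hm : m ≠ 0) : ⋂ q, residueTower m q = residuesUpTo m 1 := by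
  unfold residueTower
  rw [← Set.union_iInter, iInter_progressionTail hm, Set.union_empty]

theorem residueTower_succ_ssubset (hm : 3 ≤ m) (q : ℕ) :
    residueTower m (q + 1) ⊂ residueTower m q := by
  refine Set.ssubset_iff_of_subset ?_ |>.2 ⟨2 + q * m, Or.inr ⟨q, le_rfl, rfl⟩, ?_⟩
  · refine Set.union_subset_union_right _ ?_
    rintro x ⟨j, hj, rfl⟩
    exact ⟨j, by omega, rfl⟩
  · rintro (⟨k, hk, hx⟩ | hx)
    · exact natCast_notMem_residuesUpTo (k := 2) one_lt_two (by omega)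
        ⟨k, hk, Int.add_mul_modulus_modEq_iff.1 hx⟩
    · exact add_mul_notMem_progressionTail_succ (by omega) 2 q hx

theorem natCast_succ_mem_hfold_residueTower {h : ℕ} (hh : 2 ≤ h) (q : ℕ) :
    ((h : ℤ) + 1) ∈ hfold h (residueTower m q) := by
  have hone : (1 : ℤ) ∈ residueTower m q := Or.inl ⟨1, le_rfl, by simp⟩
  induction h, hh using Nat.le_induction with
  | base =>
    have hneg : 1 - q * m ∈ residueTower m q :=
      Or.inl ⟨1, le_rfl, Int.modEq_iff_dvd.2 ⟨q, by push_cast; ring⟩⟩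
    have htail : 2 + q * m ∈ residueTower m q := Or.inr ⟨q, le_rfl, rfl⟩
    have hsum : ((2 : ℕ) : ℤ) + 1 = (1 - q * m) + (2 + q * m) := by push_cast; ring
    exact hsum ▸ add_mem_hfold_succ le_rfl hneg htail
  | succ n hn ih =>
    push_cast
    exact add_mem_hfold_succ (by omega) ih hone

end tower

theorem stmt10 (h₀ : ℕ) (hh₀ : 3 ≤ h₀) :
    ∃ Aq : ℕ → Set ℤ,
      (∀ q, Aq (q + 1) ⊂ Aq q) ∧
      (∀ h : ℕ, 1 ≤ h →
        (hfold h (⋂ q, Aq q) = ⋂ q, hfold h (Aq q) ↔ h = 1 ∨ h₀ ≤ h)) := by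
  set m : ℤ := h₀ + 1
  have hinter := iInter_residueTower (m := m) (by omega)
  refine ⟨residueTower m, residueTower_succ_ssubset (by omega), fun h hh => ⟨fun heq => ?_, ?_⟩⟩
  · by_contra! hgap
    have hw : ((h : ℤ) + 1) ∈ ⋂ q, hfold h (residueTower m q) :=
      Set.mem_iInter.2 (natCast_succ_mem_hfold_residueTower (by omega))
    rw [← heq, hinter, hfold_residuesUpTo_one hh] at hw
    exact natCast_notMem_residuesUpTo (m := m) (n := h) (k := h + 1) (by omega) (by omega)
      (by exact_mod_cast hw)
  · rintro (rfl | hge)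
    · rfl
    · refine hfold_iInter_eq_iInter_hfold_of_eq_univ ?_
      rw [hinter, hfold_residuesUpTo_one hh, residuesUpTo_eq_univ (by omega) (by omega)]
end

section
/- For every integer d ≥ 2, there exists a strictly decreasing sequence (A_q) of sets of integers with empty intersection such that for every h ≥ 1, the intersection over q of the h-fold sumsets hA_q is empty if and only if d does not divide h. -/
open Pointwise

/-!
Take `A_q = {(k+1)!, -(d-1)(k+1)! : k ≥ q}`, i.e. the numbers `w (k+1)!` with `k ≥ q` and weight
`w ∈ {1, 1-d}`; every weight is `1` modulo `d`. If `d ∣ h`, then `0 ∈ hA_q` for every `q`, since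
`d - 1` copies of `(q+1)!` cancel `-(d-1)(q+1)!`. Conversely, let `v` lie in every `hA_q` and take
`q = (d-1)h + |v|`. In a representation of `v` as a sum of `h` elements of
`A_q`, the total weight `c_K` at the highest level `K` must vanish: otherwise it contributes at
least `(K+1)! = (K+1) K!`, while `v` and the lower levels together amount to at most `q K!`.
Descending level by level, all the weights cancel, so their sum is `0`; being a sum of `h` numbers
that are `1` modulo `d`, it is also `≡ h`, hence `d ∣ h`.
-/

open Finset
open scoped Nat

theorem hfold_eq_nsmul {α : Type*} [AddMonoid α] (S : Set α) :
    ∀ {h : ℕ}, 1 ≤ h → hfold h S = h • S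
  | 1, _ => (one_nsmul S).symm
  | n + 2, _ => by rw [hfold, hfold_eq_nsmul S (Nat.le_add_left 1 n), ← succ_nsmul]

theorem eq_zero_of_sum_range_mul_factorial {q : ℕ} {c : ℕ → ℤ} (hc : ∀ k < q, c k = 0) :
    ∀ N, |∑ k ∈ range N, c k * (k + 1)!| + ∑ k ∈ range N, |c k| ≤ q → ∀ k < N, c k = 0
  | 0 => by simp
  | N + 1 => by
    intro hsmall
    rw [sum_range_succ, sum_range_succ] at hsmall
    set low := ∑ k ∈ range N, c k * (k + 1)!
    have hcN : c N = 0 := by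
      by_contra hne
      have hqN : q ≤ N := by
        by_contra hlt
        exact hne (hc N (by omega))
      have hlow : |low| ≤ (∑ k ∈ range N, |c k|) * N ! := by
        rw [sum_mul]
        refine (abs_sum_le_sum_abs _ _).trans (sum_le_sum fun k hk => ?_)
        rw [abs_mul, Nat.abs_cast]
        gcongr
        exact mem_range.1 hk
      have htop : |c N| * (N + 1)! ≤ |low + c N * (N + 1)!| + |low| := by
        rw [← Nat.abs_cast, ← abs_mul]
        simpa using abs_sub (low + c N * (N + 1)!) low
      have hfact : ((N + 1)! : ℤ) = (N + 1) * N ! := by push_cast [Nat.factorial_succ]; ring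
      have hone : 1 ≤ |c N| := Int.one_le_abs hne
      have hNf : (1 : ℤ) ≤ N ! := by exact_mod_cast Nat.factorial_pos N
      have hq : (q : ℤ) ≤ N := by exact_mod_cast hqN
      nlinarith [abs_nonneg (low + c N * (N + 1)!),
        sum_nonneg fun k (_ : k ∈ range N) => abs_nonneg (c k)]
    intro k hk
    rcases Nat.lt_succ_iff_lt_or_eq.1 hk with hk | rfl
    · exact eq_zero_of_sum_range_mul_factorial hc N (by simpa [hcN] using hsmall) k hk
    · exact hcN

theorem sum_eq_zero_of_sum_mul_factorial {ι : Type*} [Fintype ι] (w : ι → ℤ) (k : ι → ℕ) {q : ℕ}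
    (hk : ∀ i, q ≤ k i) (hsmall : |∑ i, w i * (k i + 1)!| + ∑ i, |w i| ≤ q) :
    ∑ i, w i = 0 := by
  classical
  set N := univ.sup k + 1
  have hmaps : ∀ i ∈ univ, k i ∈ range N :=
    fun i hi => mem_range.2 (Nat.lt_succ_of_le (le_sup hi))
  set c : ℕ → ℤ := fun j => ∑ i with k i = j, w i
  have hc : ∀ j < q, c j = 0 := fun j hj =>
    sum_eq_zero fun i hi => absurd (mem_filter.1 hi).2 (by have := hk i; omega)
  have hvalue : ∑ j ∈ range N, c j * (j + 1)! = ∑ i, w i * (k i + 1)! := by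
    rw [← sum_fiberwise_of_maps_to hmaps]
    refine sum_congr rfl fun j _ => ?_
    rw [sum_mul]
    exact sum_congr rfl fun i hi => by rw [(mem_filter.1 hi).2]
  have hmass : ∑ j ∈ range N, |c j| ≤ ∑ i, |w i| := by
    rw [← sum_fiberwise_of_maps_to hmaps]
    exact sum_le_sum fun j _ => abs_sum_le_sum_abs _ _
  have hzero := eq_zero_of_sum_range_mul_factorial hc N (by rw [hvalue]; linarith)
  rw [← sum_fiberwise_of_maps_to hmaps]
  exact sum_eq_zero fun j hj => hzero j (mem_range.1 hj)

def factorialSet (d q : ℕ) : Set ℤ :=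
  {x | ∃ k, q ≤ k ∧ ∃ w ∈ ({1, 1 - (d : ℤ)} : Set ℤ), x = w * (k + 1)!}

section factorialSet

variable {d : ℕ}

theorem one_le_abs_and_abs_le_of_mem_weights (hd : 2 ≤ d) {w : ℤ}
    (hw : w ∈ ({1, 1 - (d : ℤ)} : Set ℤ)) : 1 ≤ |w| ∧ |w| ≤ d - 1 := by
  rcases hw with rfl | rfl
  · simp only [abs_one]; omega
  · rw [abs_of_nonpos (by omega)]; omega

theorem factorial_le_abs_of_mem_factorialSet (hd : 2 ≤ d) {q : ℕ} {x : ℤ}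
    (hx : x ∈ factorialSet d q) : ((q + 1)! : ℤ) ≤ |x| := by
  obtain ⟨k, hk, w, hw, rfl⟩ := hx
  rw [abs_mul, Nat.abs_cast]
  calc ((q + 1)! : ℤ) ≤ (k + 1)! := by gcongr
    _ ≤ |w| * (k + 1)! :=
      le_mul_of_one_le_left (by positivity) (one_le_abs_and_abs_le_of_mem_weights hd hw).1

theorem factorialSet_succ_ssubset (hd : 2 ≤ d) (q : ℕ) :
    factorialSet d (q + 1) ⊂ factorialSet d q := by
  have hsub : factorialSet d (q + 1) ⊆ factorialSet d q := fun _ ⟨k, hk, hx⟩ => ⟨k, by omega, hx⟩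
  refine (Set.ssubset_iff_of_subset hsub).2
    ⟨(q + 1)!, ⟨q, le_rfl, 1, by simp, by simp⟩, fun hx => ?_⟩
  have := factorial_le_abs_of_mem_factorialSet hd hx
  rw [Nat.abs_cast] at this
  exact absurd (Nat.factorial_lt_of_lt (Nat.succ_pos _) (Nat.lt_succ_self (q + 1)))
    (not_lt.2 (by exact_mod_cast this))

theorem iInter_factorialSet_eq_empty (hd : 2 ≤ d) : ⋂ q, factorialSet d q = ∅ := by
  refine Set.eq_empty_iff_forall_notMem.2 fun x hx => ?_
  have := factorial_le_abs_of_mem_factorialSet hd (Set.mem_iInter.1 hx x.natAbs)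
  have := Nat.self_le_factorial (x.natAbs + 1)
  rw [Int.abs_eq_natAbs] at *
  omega

theorem zero_mem_nsmul_factorialSet (hd : 1 ≤ d) (q : ℕ) : (0 : ℤ) ∈ d • factorialSet d q := by
  obtain ⟨e, rfl⟩ := Nat.exists_eq_add_of_le' hd
  rw [succ_nsmul]
  refine Set.mem_add.2 ⟨e • ((q + 1)! : ℤ), Set.nsmul_mem_nsmul ⟨q, le_rfl, 1, by simp, by simp⟩,
    -e * (q + 1)!, ⟨q, le_rfl, 1 - (e + 1 : ℕ), by simp, by push_cast; ring⟩, by simp⟩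

theorem dvd_of_mem_iInter_nsmul_factorialSet (hd : 2 ≤ d) {h : ℕ} {v : ℤ}
    (hv : v ∈ ⋂ q, h • factorialSet d q) : d ∣ h := by
  obtain ⟨f, hf⟩ := Set.mem_nsmul.1 (Set.mem_iInter.1 hv ((d - 1) * h + v.natAbs))
  choose k hk w hw hfw using fun i => (f i).2
  rw [List.sum_ofFn] at hf
  have hsum : ∑ i, w i = 0 := by
    refine sum_eq_zero_of_sum_mul_factorial w k hk ?_
    simp only [← hfw, hf, Int.abs_eq_natAbs]
    have := sum_le_sum fun i (_ : i ∈ univ) =>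
      (one_le_abs_and_abs_le_of_mem_weights hd (hw i)).2
    rw [sum_const, Finset.card_fin, nsmul_eq_mul] at this
    push_cast [Nat.cast_sub (by omega : 1 ≤ d)]
    nlinarith
  have hdvd : (d : ℤ) ∣ ∑ i, (w i - 1) := dvd_sum fun i _ => by
    rcases hw i with h1 | h1 <;> rw [h1] <;> simp
  rw [sum_sub_distrib, hsum] at hdvd
  exact_mod_cast (dvd_neg.1 (by simpa using hdvd) : (d : ℤ) ∣ h)

end factorialSet

theorem stmt16 (d : ℕ) (hd : 2 ≤ d) :
    ∃ Aq : ℕ → Set ℤ,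
      (∀ q, Aq (q + 1) ⊂ Aq q) ∧ (⋂ q, Aq q) = ∅ ∧
      (∀ h : ℕ, 1 ≤ h → ((⋂ q, hfold h (Aq q)) = ∅ ↔ ¬ d ∣ h)) := by
  refine ⟨factorialSet d, factorialSet_succ_ssubset hd, iInter_factorialSet_eq_empty hd,
    fun h hh => ?_⟩
  simp_rw [hfold_eq_nsmul _ hh, Set.eq_empty_iff_forall_notMem]
  constructor
  · rintro hempty ⟨m, rfl⟩
    refine hempty 0 (Set.mem_iInter.2 fun q => ?_)
    rw [mul_nsmul]
    simpa using Set.nsmul_mem_nsmul (n := m) (zero_mem_nsmul_factorialSet (d := d) (by omega) q)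
  · exact fun hndvd v hv => hndvd (dvd_of_mem_iInter_nsmul_factorialSet hd hv)
end
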